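/- Let i ≥ 1 and j ≥ 0 be integers and let A be a symmetric n×n matrix with entries in {0,1}, with i + j + 1 ≤ n and eigenvalues λ_1 ≥ ⋯ ≥ λ_n. If equality λ_{i+1}(A) − λ_{n−j}(A) = (n/2)·√((i+j+1)/(i(j+1))) holds, then λ_1 = n/2, λ_2 = ⋯ = λ_{i+1} = (n/2)·√((j+1)/(i(i+j+1))), λ_{n−j} = ⋯ = λ_n = −(n/2)·√(i/((j+1)(i+j+1))), and λ_{i+2} = ⋯ = λ_{n−j−1} = 0. -/

import Mathlib

/-!
Write `m = λ₁`, `x = λ_{i+1}` and `y = -λ_{n-j}`. For a symmetric `0/1` matrix,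
`∑ λₖ² = tr A² = 𝟙ᵀ A 𝟙 ≤ n λ₁`. Keeping only `λ₁²`, the `i` eigenvalues `λ₂, …, λ_{i+1} ≥ x`
and the `j + 1` eigenvalues `λ_{n-j}, …, λ_n ≤ -y` gives `m² + i x₊² + (j+1) y₊² ≤ n m`, hence
`i x₊² + (j+1) y₊² ≤ n²/4`, and weighted Cauchy–Schwarz bounds `x + y` by
`(n/2) √((i+j+1)/(i(j+1)))`. At equality every step is tight: `m = n/2`, `i x = (j+1) y`, and
all discarded eigenvalues vanish, which pins down the whole spectrum.
-/

open Finset Matrix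

theorem Matrix.IsSymm.trace_mul_self_of_zero_one {ι R : Type*} [Fintype ι] [NonAssocSemiring R]
    {A : Matrix ι ι R} (hA : A.IsSymm) (h01 : ∀ p q, A p q = 0 ∨ A p q = 1) :
    (A * A).trace = 1 ⬝ᵥ A *ᵥ 1 := by
  simp only [trace, diag, mul_apply, dotProduct, mulVec, Pi.one_apply, one_mul, mul_one]
  refine sum_congr rfl fun p _ => sum_congr rfl fun q _ => ?_
  rw [hA.apply p q]
  rcases h01 p q with h | h <;> simp [h]

namespace Matrix.IsHermitian

variable {ι : Type*} [Fintype ι] [DecidableEq ι]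

theorem sum_eigenvalues_sq {𝕜 : Type*} [RCLike 𝕜] {A : Matrix ι ι 𝕜} (hA : A.IsHermitian) :
    ∑ k, (hA.eigenvalues k : 𝕜) ^ 2 = (A * A).trace := by
  conv_rhs => rw [hA.spectral_theorem, ← map_mul, Unitary.conjStarAlgAut_apply, trace_mul_cycle,
    Unitary.coe_star_mul_self, one_mul, diagonal_mul_diagonal, trace_diagonal]
  simp [sq]

variable {A : Matrix ι ι ℝ}

open scoped MatrixOrder in
theorem dotProduct_mulVec_le (hA : A.IsHermitian) {L : ℝ} (hL : ∀ k, hA.eigenvalues k ≤ L)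
    (x : ι → ℝ) : x ⬝ᵥ A *ᵥ x ≤ L * (x ⬝ᵥ x) := by
  have hAL : A ≤ algebraMap ℝ _ L := le_algebraMap_of_spectrum_le (by
    rw [hA.spectrum_real_eq_range_eigenvalues]
    rintro _ ⟨k, rfl⟩
    exact hL k) hA.isSelfAdjoint
  have := hAL.dotProduct_mulVec_nonneg x
  simp only [Algebra.algebraMap_eq_smul_one, sub_mulVec, smul_mulVec, one_mulVec, dotProduct_sub,
    dotProduct_smul, smul_eq_mul, sub_nonneg] at this
  exact this

theorem sum_eigenvalues_sq_le_of_zero_one (hA : A.IsHermitian)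
    (h01 : ∀ p q, A p q = 0 ∨ A p q = 1) {L : ℝ} (hL : ∀ k, hA.eigenvalues k ≤ L) :
    ∑ k, hA.eigenvalues k ^ 2 ≤ Fintype.card ι * L := by
  calc ∑ k, hA.eigenvalues k ^ 2 = (A * A).trace := by simpa using hA.sum_eigenvalues_sq
    _ = 1 ⬝ᵥ A *ᵥ 1 := (isHermitian_iff_isSymm.1 hA).trace_mul_self_of_zero_one h01
    _ ≤ L * (1 ⬝ᵥ 1) := hA.dotProduct_mulVec_le hL 1
    _ = Fintype.card ι * L := by simp [dotProduct, mul_comm]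

end Matrix.IsHermitian

theorem div_add_mul_sqrt_div_mul {a b : ℝ} (ha : 0 < a) (hb : 0 < b) :
    b / (a + b) * √((a + b) / (a * b)) = √(b / (a * (a + b))) := by
  rw [← Real.sqrt_sq (by positivity : 0 ≤ b / (a + b)), ← Real.sqrt_mul (by positivity)]
  congr 1
  field_simp

theorem eq_of_sq_add_weighted_sq_le {N a b m x y : ℝ} (hN : 0 ≤ N) (ha : 0 < a) (hb : 0 < b)
    (h : m ^ 2 + a * max x 0 ^ 2 + b * max y 0 ^ 2 ≤ N * m)
    (hxy : x + y = N / 2 * √((a + b) / (a * b))) :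
    m ^ 2 + a * max x 0 ^ 2 + b * max y 0 ^ 2 = N * m ∧ m = N / 2 ∧
      x = N / 2 * √(b / (a * (a + b))) ∧ y = N / 2 * √(a / (b * (a + b))) := by
  set xp := max x 0
  set yp := max y 0
  have hab : 0 < a * b := mul_pos ha hb
  have hsq : (x + y) ^ 2 * (a * b) = N ^ 2 / 4 * (a + b) := by
    rw [hxy, mul_pow, Real.sq_sqrt (by positivity)]
    field_simp
    ring
  have hxy0 : 0 ≤ x + y := hxy ▸ by positivity
  have hxyp : x + y ≤ xp + yp := add_le_add (le_max_left x 0) (le_max_left y 0)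
  -- weighted Cauchy–Schwarz `(a xp² + b yp²)(a + b) = (xp + yp)² ab + (a xp - b yp)²`, rearranged
  -- so that the slack of `h` is a sum of three nonnegative terms
  have hCS : (m - N / 2) ^ 2 * (a + b) + (a * xp - b * yp) ^ 2
      + ((xp + yp) ^ 2 - (x + y) ^ 2) * (a * b)
      = (m ^ 2 + a * xp ^ 2 + b * yp ^ 2 - N * m) * (a + b) := by
    linear_combination -hsq
  have h₁ : 0 ≤ (m - N / 2) ^ 2 * (a + b) := by positivity
  have h₂ : 0 ≤ (a * xp - b * yp) ^ 2 := sq_nonneg _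
  have h₃ : 0 ≤ ((xp + yp) ^ 2 - (x + y) ^ 2) * (a * b) :=
    mul_nonneg (sub_nonneg.2 (pow_le_pow_left₀ hxy0 hxyp 2)) hab.le
  have h₄ : (m ^ 2 + a * xp ^ 2 + b * yp ^ 2 - N * m) * (a + b) ≤ 0 :=
    mul_nonpos_of_nonpos_of_nonneg (by linarith) (by positivity)
  have hm : m = N / 2 := by
    have : (m - N / 2) ^ 2 = 0 := by nlinarith
    linarith [pow_eq_zero_iff (n := 2) two_ne_zero |>.1 this]
  have hxyp' : xp + yp = x + y := by
    have : (xp + yp) ^ 2 = (x + y) ^ 2 := by nlinarith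
    exact (sq_eq_sq₀ (hxy0.trans hxyp) hxy0).1 this
  have hx : x = xp := by linarith [le_max_left x 0, le_max_left y 0]
  have hy : y = yp := by linarith [le_max_left x 0, le_max_left y 0]
  have hbal : a * x = b * y := by
    have : (a * xp - b * yp) ^ 2 = 0 := by linarith
    rw [hx, hy]
    linarith [pow_eq_zero_iff (n := 2) two_ne_zero |>.1 this]
  refine ⟨by nlinarith, hm, ?_, ?_⟩
  · rw [← div_add_mul_sqrt_div_mul ha hb]
    calc x = b / (a + b) * (x + y) := by field_simp; linarith
      _ = _ := by rw [hxy]; ring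
  · rw [add_comm a b, ← div_add_mul_sqrt_div_mul hb ha]
    calc y = a / (b + a) * (x + y) := by field_simp; linarith
      _ = _ := by rw [hxy, add_comm b a, mul_comm b a]; ring

/-- The spectrum `a, b, …, b, 0, …, 0, c, …, c` of the equality case, indexed from `0`
(index `k` carries `λ_{k+1}`). -/
def stepProfile (n i j : ℕ) (a b c : ℝ) (k : ℕ) : ℝ :=
  if k = 0 then a else if k ≤ i then b else if n - j - 1 ≤ k then c else 0

theorem sum_range_stepProfile {n i j : ℕ} (h : i + j + 2 ≤ n) (a b c : ℝ) :
    ∑ k ∈ range n, stepProfile n i j a b c k = a + i * b + (j + 1) * c := by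
  have sum_block : ∀ p q v, (∀ k, p ≤ k → k < q → stepProfile n i j a b c k = v) →
      ∑ k ∈ Ico p q, stepProfile n i j a b c k = (q - p : ℕ) * v := fun p q v hv => by
    rw [sum_congr rfl fun k hk => hv k (mem_Ico.1 hk).1 (mem_Ico.1 hk).2, sum_const,
      Nat.card_Ico, nsmul_eq_mul]
  rw [range_eq_Ico, ← sum_Ico_consecutive _ (Nat.zero_le _) (by omega : n - j - 1 ≤ n),
    ← sum_Ico_consecutive _ (Nat.zero_le _) (by omega : i + 1 ≤ n - j - 1),
    ← sum_Ico_consecutive _ (Nat.zero_le _) (by omega : 1 ≤ i + 1),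
    sum_block 0 1 a, sum_block 1 (i + 1) b, sum_block (i + 1) (n - j - 1) 0,
    sum_block (n - j - 1) n c, show n - (n - j - 1) = j + 1 by omega]
  · push_cast; ring
  all_goals intro k hpk hkq; unfold stepProfile; split_ifs <;> first | rfl | omega

theorem max_zero_sq_le_sq {x t : ℝ} (h : x ≤ t) : max x 0 ^ 2 ≤ t ^ 2 := by
  rcases le_total x 0 with hx | hx
  · simpa [max_eq_right hx] using sq_nonneg t
  · rw [max_eq_left hx]
    exact pow_le_pow_left₀ hx h 2

namespace Antitone

variable {n i j : ℕ} {μ : Fin n → ℝ}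

theorem stepProfile_le_sq (hμ : Antitone μ) (hn : i + j < n) (k : Fin n) :
    stepProfile n i j (μ ⟨0, by omega⟩ ^ 2) (max (μ ⟨i, by omega⟩) 0 ^ 2)
      (max (-μ ⟨n - j - 1, by omega⟩) 0 ^ 2) k ≤ μ k ^ 2 := by
  unfold stepProfile
  split_ifs with h0 hi hj
  · rw [show k = ⟨0, by omega⟩ from Fin.ext h0]
  · exact max_zero_sq_le_sq (hμ (Fin.le_def.2 hi))
  · exact neg_sq (μ k) ▸
      max_zero_sq_le_sq (neg_le_neg (hμ (show ⟨n - j - 1, by omega⟩ ≤ k from hj)))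
  · exact sq_nonneg _

theorem eq_stepProfile_of_sq_eq (hμ : Antitone μ) (hn : i + j < n)
    (hx : 0 ≤ μ ⟨i, by omega⟩) (hy : μ ⟨n - j - 1, by omega⟩ ≤ 0) {k : Fin n}
    (hk : μ k ^ 2 = stepProfile n i j (μ ⟨0, by omega⟩ ^ 2) (μ ⟨i, by omega⟩ ^ 2)
      (μ ⟨n - j - 1, by omega⟩ ^ 2) k) :
    μ k = stepProfile n i j (μ ⟨0, by omega⟩) (μ ⟨i, by omega⟩) (μ ⟨n - j - 1, by omega⟩) k := by
  unfold stepProfile at hk ⊢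
  split_ifs at hk ⊢ with h0 hi hj
  · rw [show k = ⟨0, by omega⟩ from Fin.ext h0]
  · exact (sq_eq_sq₀ (hx.trans (hμ (Fin.le_def.2 hi))) hx).1 hk
  · have := hμ (show ⟨n - j - 1, by omega⟩ ≤ k from hj)
    nlinarith
  · exact pow_eq_zero_iff two_ne_zero |>.1 hk

theorem eq_stepProfile_of_sum_sq_le (hμ : Antitone μ) (hi : 1 ≤ i) (hn : i + j + 2 ≤ n)
    (hsum : ∑ k, μ k ^ 2 ≤ n * μ ⟨0, by omega⟩)
    (heq : μ ⟨i, by omega⟩ - μ ⟨n - j - 1, by omega⟩ =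
      ((n : ℝ) / 2) * √(((i : ℝ) + j + 1) / ((i : ℝ) * ((j : ℝ) + 1)))) (k : Fin n) :
    μ k = stepProfile n i j ((n : ℝ) / 2)
      (((n : ℝ) / 2) * √(((j : ℝ) + 1) / ((i : ℝ) * ((i : ℝ) + j + 1))))
      (-(((n : ℝ) / 2) * √((i : ℝ) / (((j : ℝ) + 1) * ((i : ℝ) + j + 1))))) k := by
  have hle := hμ.stepProfile_le_sq (i := i) (j := j) (by omega)
  have hmain : μ ⟨0, by omega⟩ ^ 2 + i * max (μ ⟨i, by omega⟩) 0 ^ 2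
      + (j + 1) * max (-μ ⟨n - j - 1, by omega⟩) 0 ^ 2 ≤ n * μ ⟨0, by omega⟩ := by
    rw [← sum_range_stepProfile hn, ← Fin.sum_univ_eq_sum_range]
    exact (sum_le_sum fun k _ => hle k).trans hsum
  obtain ⟨htight, hm, hx, hy⟩ := eq_of_sq_add_weighted_sq_le (by positivity)
    (by exact_mod_cast hi) (by positivity) hmain (by rw [← sub_eq_add_neg, heq, add_assoc])
  rw [← add_assoc] at hx hy
  have hx0 : 0 ≤ μ ⟨i, by omega⟩ := hx ▸ by positivity
  have hy0 : μ ⟨n - j - 1, by omega⟩ ≤ 0 := neg_nonneg.1 (hy ▸ by positivity)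
  rw [max_eq_left hx0, max_eq_left (neg_nonneg.2 hy0), neg_sq] at hle htight
  have hsum_eq : ∑ k : Fin n, stepProfile n i j (μ ⟨0, by omega⟩ ^ 2) (μ ⟨i, by omega⟩ ^ 2)
      (μ ⟨n - j - 1, by omega⟩ ^ 2) k = ∑ k, μ k ^ 2 := by
    refine le_antisymm (sum_le_sum fun k _ => hle k) ?_
    rw [Fin.sum_univ_eq_sum_range, sum_range_stepProfile hn, htight]
    exact hsum
  have hsq := (sum_eq_sum_iff_of_le fun k _ => hle k).1 hsum_eq k (mem_univ k)
  rw [hμ.eq_stepProfile_of_sq_eq (by omega) hx0 hy0 hsq.symm, hm, hx, ← neg_neg (μ _), hy]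

end Antitone

/-- Equality case of the `(i,j)`-spread bound: if equality
`λ_{i+1}(A) - λ_{n-j}(A) = (n/2) √((i+j+1)/(i(j+1)))` holds, then the spectrum is determined:
`λ_1 = n/2`, `λ_2 = ⋯ = λ_{i+1} = (n/2)√((j+1)/(i(i+j+1)))`,
`λ_{n-j} = ⋯ = λ_n = -(n/2)√(i/((j+1)(i+j+1)))` and `λ_{i+2} = ⋯ = λ_{n-j-1} = 0`. -/
theorem spread_ij_equality_case (n i j : ℕ) (hi : 1 ≤ i) (hn : i + j + 1 ≤ n)
    (A : Matrix (Fin n) (Fin n) ℝ) (hA : A.IsHermitian)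
    (hA01 : ∀ a b, A a b = 0 ∨ A a b = 1)
    (μ : Fin n → ℝ) (hmono : Antitone μ)
    (hperm : Finset.univ.val.map μ = Finset.univ.val.map hA.eigenvalues)
    (heq : μ ⟨i, by omega⟩ - μ ⟨n - j - 1, by omega⟩ =
      ((n : ℝ) / 2) * Real.sqrt (((i : ℝ) + j + 1) / ((i : ℝ) * ((j : ℝ) + 1)))) :
    μ ⟨0, by omega⟩ = (n : ℝ) / 2 ∧
    (∀ k : Fin n, 1 ≤ (k : ℕ) → (k : ℕ) ≤ i →
      μ k = ((n : ℝ) / 2) * Real.sqrt (((j : ℝ) + 1) / ((i : ℝ) * ((i : ℝ) + j + 1)))) ∧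
    (∀ k : Fin n, n - j - 1 ≤ (k : ℕ) →
      μ k = -(((n : ℝ) / 2) * Real.sqrt ((i : ℝ) / (((j : ℝ) + 1) * ((i : ℝ) + j + 1))))) ∧
    (∀ k : Fin n, i + 1 ≤ (k : ℕ) → (k : ℕ) ≤ n - j - 2 → μ k = 0) := by
  have htop : ∀ k, hA.eigenvalues k ≤ μ ⟨0, by omega⟩ := fun k => by
    obtain ⟨k', -, hk'⟩ :=
      Multiset.mem_map.1 (hperm ▸ Multiset.mem_map_of_mem hA.eigenvalues (mem_univ_val k))
    exact hk' ▸ hmono (show ⟨0, by omega⟩ ≤ k' from Nat.zero_le _)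
  have hsum : ∑ k, μ k ^ 2 ≤ n * μ ⟨0, by omega⟩ := by
    have hsq : ∑ k, μ k ^ 2 = ∑ k, hA.eigenvalues k ^ 2 := by
      have := congrArg (fun s => (s.map (· ^ 2)).sum) hperm
      simp only [Multiset.map_map] at this
      exact this
    simpa [hsq] using hA.sum_eigenvalues_sq_le_of_zero_one hA01 htop
  have hn2 : i + j + 2 ≤ n := by
    by_contra h
    rw [show (⟨n - j - 1, by omega⟩ : Fin n) = ⟨i, by omega⟩ from
      Fin.ext (show n - j - 1 = i by omega), sub_self] at heq
    have hi' : (0 : ℝ) < i := by exact_mod_cast hi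
    have hn0 : (0 : ℝ) < n := by exact_mod_cast (by omega : 0 < n)
    exact (mul_pos (by positivity) (Real.sqrt_pos.2 (by positivity))).ne heq
  have hprofile := hmono.eq_stepProfile_of_sum_sq_le hi hn2 hsum heq
  refine ⟨by simp [hprofile, stepProfile], fun k _ _ => ?_, fun k _ => ?_, fun k _ _ => ?_⟩ <;>
    rw [hprofile] <;> unfold stepProfile <;> split_ifs <;> first | rfl | omega
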